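/- arXiv:2203.13071 — 2 statements merged into one kernel-verified Lean document; each statement's English description precedes it below -/
import Mathlib

section
/- Let X and F be compact sets in ℝⁿ with F ⊆ X ⊆ s⋆•F for some s⋆ > 1, and 0 ∈ int F. Suppose there exist s > 1 and x ≠ 0 with x ∈ X, s•x ∈ X, and t•x ∉ X for all t ∈ (1, s). Then s⋆ ≥ s. -/
open scoped Pointwise

/-- Lemma 3: if `F ⊆ X ⊆ s⋆ • F` with `s⋆ > 1`, `0 ∈ int F`, and there are
`s > 1`, `x ≠ 0` with `s • x ∈ X`, but `t • x ∉ X` for all `t ∈ (1, s)`,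
then `s⋆ ≥ s`. -/
theorem scaling_lower_bound {n : ℕ} (X F : Set (EuclideanSpace ℝ (Fin n)))
    (hX : IsCompact X) (hF : IsCompact F)
    (sstar : ℝ) (hsstar : 1 < sstar)
    (h1 : F ⊆ X) (h2 : X ⊆ sstar • F)
    (h0 : (0 : EuclideanSpace ℝ (Fin n)) ∈ interior F)
    (s : ℝ) (hs : 1 < s) (x : EuclideanSpace ℝ (Fin n)) (hx0 : x ≠ 0)
    (hxX : x ∈ X) (hsxX : s • x ∈ X)
    (hgap : ∀ t ∈ Set.Ioo (1 : ℝ) s, t • x ∉ X) :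
    s ≤ sstar := by
  by_contra h
  push_neg at h
  obtain ⟨f, hfF, hf⟩ := h2 hsxX
  have hs0 : (0:ℝ) < sstar := lt_trans one_pos hsstar
  have hfx : f = (s / sstar) • x := by
    have : sstar⁻¹ • (sstar • f) = sstar⁻¹ • (s • x) := congrArg _ hf
    rwa [smul_smul, smul_smul, inv_mul_cancel₀ hs0.ne', one_smul,
      ← div_eq_inv_mul] at this
  refine hgap (s / sstar) ⟨?_, ?_⟩ (h1 (hfx ▸ hfF))
  · exact (one_lt_div hs0).2 h
  · exact (div_lt_self (lt_trans one_pos hs) hsstar)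
end

section
/- (Kernel outer bound by supporting tangent half-spaces) Let X = {x ∈ ℝⁿ | gᵢ(x) ≤ 1, i ∈ [m]} with each gᵢ continuously differentiable. Then ker X ⊆ {p | ⟨∇gᵢ(q), p − q⟩ ≤ 0 for all q ∈ ∂Xᵢ and all i ∈ [m]}, where ∂Xᵢ = {x | gᵢ(x) = 1, gⱼ(x) ≤ 1 ∀ j ≠ i}. -/
open scoped RealInnerProductSpace

/-- The star kernel of a set `S` (stated without requiring `x ∈ S`). -/
def starKernel {n : ℕ} (S : Set (EuclideanSpace ℝ (Fin n))) :
    Set (EuclideanSpace ℝ (Fin n)) :=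
  {x | ∀ t ∈ Set.Icc (0 : ℝ) 1, ∀ y ∈ S, t • x + (1 - t) • y ∈ S}

/-!
If `p ∈ ker X` and `q ∈ X`, the whole segment `[q, p]` lies in `X`, so on it `gᵢ ≤ 1 = gᵢ q`:
`gᵢ` restricted to the segment is maximal at `q`. Fermat's rule along the tangent direction
`p - q` of the segment then gives `Dgᵢ(q)(p - q) ≤ 0`, which is `⟪∇gᵢ q, p - q⟫ ≤ 0`.
-/

theorem segment_subset_of_mem_starKernel {n : ℕ} {S : Set (EuclideanSpace ℝ (Fin n))}
    {x y : EuclideanSpace ℝ (Fin n)} (hx : x ∈ starKernel S) (hy : y ∈ S) :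
    segment ℝ y x ⊆ S := by
  rintro _ ⟨a, b, ha, hb, hab, rfl⟩
  have hb1 : b ≤ 1 := by linarith
  simpa [← hab, add_comm] using hx b ⟨hb, hb1⟩ y hy

theorem inner_gradient_sub_nonpos_of_forall_segment_le {F : Type*} [NormedAddCommGroup F]
    [InnerProductSpace ℝ F] [CompleteSpace F] {f : F → ℝ} {p q : F}
    (hf : DifferentiableAt ℝ f q) (hle : ∀ z ∈ segment ℝ q p, f z ≤ f q) :
    ⟪gradient f q, p - q⟫ ≤ 0 := by
  have hmax : IsLocalMaxOn f (segment ℝ q p) q := IsMaxOn.localize hle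
  rw [inner_gradient_left]
  exact hmax.hasFDerivWithinAt_nonpos hf.hasFDerivAt.hasFDerivWithinAt
    (sub_mem_posTangentConeAt_of_segment_subset subset_rfl)

/-- Kernel outer bound by supporting tangent half-spaces: for
`X = {x | gᵢ x ≤ 1 ∀ i}` with each `gᵢ` continuously differentiable,
`ker X` is contained in the intersection of linearized active constraints over
the pieces `∂Xᵢ = {x | gᵢ x = 1, gⱼ x ≤ 1 ∀ j ≠ i}` of the boundary. -/
theorem starKernel_subset_tangent_halfspaces {n m : ℕ}
    (g : Fin m → EuclideanSpace ℝ (Fin n) → ℝ)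
    (hg : ∀ i, ContDiff ℝ 1 (g i)) :
    starKernel {x | ∀ i, g i x ≤ 1} ⊆
      {p | ∀ i : Fin m, ∀ q : EuclideanSpace ℝ (Fin n),
        (g i q = 1 ∧ ∀ j ≠ i, g j q ≤ 1) →
        ⟪gradient (g i) q, p - q⟫ ≤ 0} := by
  intro p hp i q ⟨hqi, hqj⟩
  have hqX : q ∈ {x | ∀ j, g j x ≤ 1} := fun j ↦ by
    rcases eq_or_ne j i with rfl | hji
    · exact hqi.le
    · exact hqj j hji
  refine inner_gradient_sub_nonpos_of_forall_segment_le
    ((hg i).differentiable one_ne_zero q) fun z hz ↦ ?_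
  rw [hqi]
  exact segment_subset_of_mem_starKernel hp hqX hz i
end
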